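/- Let A be a T-brace whose additive group (A,+) is torsion-free. If A is Smoktunowicz-nilpotent, then A is abelian, i.e., a ⋆ b = 0 for all a,b ∈ A. -/

import Mathlib

/-!
Basic theory of left braces (skew left braces of abelian type), following
Dixon–Kurdachenko–Subbotin, "On the structure of braces whose subideals are ideals".
-/

universe u v

/-- A left brace: an abelian group `(A,+)`, a group `(A,·)`, satisfying
`a(b+c) = ab + ac - a`.  (The additive and multiplicative identities then coincide.) -/
class LeftBrace (A : Type u) extends AddCommGroup A, Group A where
  mul_add_eq : ∀ a b c : A, a * (b + c) = a * b + a * c - a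

namespace LeftBrace

variable {A : Type u} [LeftBrace A]

/-- The star operation `a ⋆ b = ab - a - b`. -/
def bstar (a b : A) : A := a * b - a - b

/-- A subset of a left brace is a subbrace if it is closed under the additive-group
and multiplicative-group operations (equivalently, it is a left brace under the
restricted operations). -/
structure IsSubbrace (S : Set A) : Prop where
  zero_mem : (0 : A) ∈ S
  add_mem : ∀ {a b : A}, a ∈ S → b ∈ S → a + b ∈ S
  neg_mem : ∀ {a : A}, a ∈ S → -a ∈ S
  mul_mem : ∀ {a b : A}, a ∈ S → b ∈ S → a * b ∈ S
  inv_mem : ∀ {a : A}, a ∈ S → a⁻¹ ∈ S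

/-- `I` is an ideal of the subbrace `J`: `I ⊆ J`, both are subbraces, and
`a ⋆ z, z ⋆ a ∈ I` for all `a ∈ J`, `z ∈ I`. -/
structure IsIdealIn (I J : Set A) : Prop where
  subset : I ⊆ J
  subbrace : IsSubbrace I
  ambient_subbrace : IsSubbrace J
  star_mem_left : ∀ a ∈ J, ∀ z ∈ I, bstar a z ∈ I
  star_mem_right : ∀ a ∈ J, ∀ z ∈ I, bstar z a ∈ I

/-- `I` is an ideal of the brace `A`. -/
def IsIdeal (I : Set A) : Prop := IsIdealIn I (Set.univ : Set A)

/-- `A` is a T-brace if being an ideal is a transitive relation: an ideal of an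
ideal of `A` is an ideal of `A`. -/
def IsTBrace (A : Type u) [LeftBrace A] : Prop :=
  ∀ I J : Set A, IsIdealIn I J → IsIdeal J → IsIdeal I

/-- The `⋆`-center `ζ(⋆,A) = {a | a ⋆ x = x ⋆ a = 0 for all x}`. -/
def starCenter (A : Type u) [LeftBrace A] : Set A :=
  {a : A | ∀ x : A, bstar a x = 0 ∧ bstar x a = 0}

/-- The preimage in `A` of the `⋆`-center of the quotient of `A` by (the ideal) `S`:
`a` belongs to it iff `a ⋆ x ∈ S` and `x ⋆ a ∈ S` for every `x ∈ A`. -/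
def nextCenter (A : Type u) [LeftBrace A] (S : Set A) : Set A :=
  {a : A | ∀ x : A, bstar a x ∈ S ∧ bstar x a ∈ S}

/-- The upper `⋆`-central series, indexed by naturals:
`ζ₀(⋆,A) = 0` and `ζ_{n+1}(⋆,A)/ζ_n(⋆,A) = ζ(⋆, A/ζ_n(⋆,A))`. -/
def zetaNat (A : Type u) [LeftBrace A] : ℕ → Set A
  | 0 => ({0} : Set A)
  | n + 1 => nextCenter A (zetaNat A n)

/-- The upper `⋆`-central series, indexed by ordinals (unions at limit ordinals). -/
noncomputable def zetaOrd (A : Type u) [LeftBrace A] (o : Ordinal.{v}) : Set A :=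
  Ordinal.limitRecOn o (({0} : Set A))
    (fun _ ih => nextCenter A ih)
    (fun o _ ih => ⋃ (o' : Ordinal) (h : o' < o), ih o' h)

/-- The upper `⋆`-hypercenter `ζ_∞(⋆,A)`: the final (stable) term of the upper
`⋆`-central series, i.e. the union of all its terms. -/
noncomputable def starHypercenter (A : Type u) [LeftBrace A] : Set A :=
  ⋃ o : Ordinal.{u}, zetaOrd A o

/-- `A` is `⋆`-hypercentral if `A = ζ_γ(⋆,A)` for some ordinal `γ`. -/
def IsStarHypercentral (A : Type u) [LeftBrace A] : Prop :=
  ∃ γ : Ordinal.{u}, zetaOrd A γ = (Set.univ : Set A)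

/-- `K ⋆ L`: the additive subgroup of `(A,+)` generated by all `x ⋆ y`, `x ∈ K`, `y ∈ L`. -/
def setStar (K L : Set A) : AddSubgroup A :=
  AddSubgroup.closure {z : A | ∃ x ∈ K, ∃ y ∈ L, z = bstar x y}

/-- `rightStarSeries A n = A^{(n+1)}`, where `A^{(1)} = A` and `A^{(n+1)} = A^{(n)} ⋆ A`. -/
def rightStarSeries (A : Type u) [LeftBrace A] : ℕ → Set A
  | 0 => (Set.univ : Set A)
  | n + 1 => ((setStar (rightStarSeries A n) (Set.univ : Set A) : AddSubgroup A) : Set A)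

/-- `leftStarSeries A n = A^{n+1}`, where `A^1 = A` and `A^{n+1} = A ⋆ A^n`. -/
def leftStarSeries (A : Type u) [LeftBrace A] : ℕ → Set A
  | 0 => (Set.univ : Set A)
  | n + 1 => ((setStar (Set.univ : Set A) (leftStarSeries A n) : AddSubgroup A) : Set A)

/-- `A` is Smoktunowicz-nilpotent if `A^{(n)} = A^k = 0` for some naturals `n, k`. -/
def IsSmoktunowiczNilpotent (A : Type u) [LeftBrace A] : Prop :=
  ∃ n k : ℕ, rightStarSeries A n = ({0} : Set A) ∧ leftStarSeries A k = ({0} : Set A)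

/-- The subbrace generated by a subset `M`: the intersection of all subbraces containing `M`. -/
def braceClosure (M : Set A) : Set A := ⋂₀ {S : Set A | IsSubbrace S ∧ M ⊆ S}

end LeftBrace

/-!
Write `ζ₁ = ζ(⋆,A)` and `ζ₂` for the second term of the upper `⋆`-central series.
In a T-brace with `A^K = 0`, an element `z` with `z ⋆ A ⊆ Z`, for an ideal `Z` with `A/Z`
torsion-free, is central modulo `Z`: `ℤz + Z` is an ideal of the ideal `{x | x ⋆ A ⊆ Z}`,
hence of `A`, so `a ⋆ z ≡ m z (mod Z)`, and nilpotency of `a ⋆ ·` gives `m = 0` or `z ∈ Z`.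
Torsion-freeness of `A` makes `A/ζ₁` torsion-free, since `λ_z ^ n = 1` with `λ_z - 1`
nilpotent forces `λ_z = 1`. Moreover `ζ₂ = ζ₁`: for `w ∈ ζ₂ \ ζ₁` the group `ℤw + ℤ(w ⋆ w)`
is an ideal, so every star with `w` is a multiple of `w ⋆ w`; for `w = 2z` this gives
`z ⋆ z = 0`, and then `z ∈ ζ₁`. Hence `A^{(m+1)} ⊆ ζ₁` implies `A^{(m)} ⊆ ζ₁`, and descending
from `A^{(n)} = 0` gives `A = ζ₁`.
-/

instance AddMonoid.End.instIsAddTorsionFree {M : Type*} [AddCommMonoid M] [IsAddTorsionFree M] :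
    IsAddTorsionFree (AddMonoid.End M) :=
  ⟨fun _ hn _ _ h => AddMonoidHom.ext fun x => nsmul_right_injective hn (DFunLike.congr_fun h x)⟩

theorem eq_zero_of_isNilpotent_of_one_add_pow_eq_one {R : Type*} [Ring R] [IsAddTorsionFree R]
    {f : R} (hf : IsNilpotent f) {n : ℕ} (hn : n ≠ 0) (h : (1 + f) ^ n = 1) : f = 0 := by
  have hdrop : ∀ k, f ^ (k + 2) = 0 → f ^ (k + 1) = 0 := by
    intro k hk
    have hexp : ∀ m : ℕ, f ^ k * (1 + f) ^ m = f ^ k + m • f ^ (k + 1) := by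
      intro m
      induction m with
      | zero => simp
      | succ m ih =>
        rw [pow_succ, ← mul_assoc, ih]
        simp only [mul_add, add_mul, mul_one, smul_mul_assoc, ← pow_succ, hk, smul_zero,
          add_zero, succ_nsmul]
        abel
    have hn' := hexp n
    rw [h, mul_one, left_eq_add] at hn'
    exact (nsmul_eq_zero_iff_right hn).1 hn'
  obtain ⟨N, hN⟩ := hf
  have : ∀ N, f ^ (N + 1) = 0 → f = 0 := by
    intro N
    induction N with
    | zero => simp
    | succ N ih => exact fun hN => ih (hdrop N hN)
  exact this N (by rw [pow_succ, hN, zero_mul])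

namespace LeftBrace

variable {A : Type u} [LeftBrace A]

local infixl:70 " ⋆ " => bstar

theorem mul_zero_eq (a : A) : a * 0 = a := by
  have h := mul_add_eq a 0 0
  rw [add_zero] at h
  linear_combination (norm := abel) -h

theorem one_eq_zero : (1 : A) = 0 := by
  simpa using (mul_zero_eq (1 : A)).symm

theorem zero_mul_eq (a : A) : 0 * a = a := by
  rw [← one_eq_zero, one_mul]

theorem mul_eq_add_add_bstar (a b : A) : a * b = a + b + a ⋆ b := by
  rw [bstar]; abel

theorem bstar_add (a b c : A) : a ⋆ (b + c) = a ⋆ b + a ⋆ c := by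
  simp only [bstar, mul_add_eq]; abel

theorem bstar_zero (a : A) : a ⋆ 0 = 0 := by simp [bstar, mul_zero_eq]

theorem zero_bstar (a : A) : 0 ⋆ a = 0 := by simp [bstar, zero_mul_eq]

def starHom (a : A) : AddMonoid.End A where
  toFun := bstar a
  map_zero' := bstar_zero a
  map_add' := bstar_add a

@[simp]
theorem starHom_apply (a b : A) : starHom a b = a ⋆ b := rfl

theorem bstar_neg (a b : A) : a ⋆ -b = -(a ⋆ b) := map_neg (starHom a) b

theorem bstar_sub (a b c : A) : a ⋆ (b - c) = a ⋆ b - a ⋆ c := map_sub (starHom a) b c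

theorem bstar_zsmul (a : A) (n : ℤ) (b : A) : a ⋆ (n • b) = n • (a ⋆ b) :=
  map_zsmul (starHom a) n b

theorem mul_bstar (a b c : A) : (a * b) ⋆ c = a ⋆ (b ⋆ c) + a ⋆ c + b ⋆ c := by
  have h₁ := mul_add_eq a (b + c) (b ⋆ c)
  have h₂ := mul_add_eq a b c
  rw [← mul_eq_add_add_bstar, ← mul_assoc] at h₁
  have h₃ := mul_eq_add_add_bstar a (b ⋆ c)
  have h₄ := mul_eq_add_add_bstar a c
  show a * b * c - a * b - c = _
  linear_combination (norm := abel) h₁ + h₂ + h₃ + h₄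

theorem inv_add_bstar_inv (a : A) : a⁻¹ + a ⋆ a⁻¹ = -a := by
  have h := mul_eq_add_add_bstar a a⁻¹
  rw [mul_inv_cancel, one_eq_zero] at h
  linear_combination (norm := abel) -h

theorem inv_bstar (a b : A) : a⁻¹ ⋆ b = -(a ⋆ b + a ⋆ (a⁻¹ ⋆ b)) := by
  have h := mul_bstar a a⁻¹ b
  rw [mul_inv_cancel, one_eq_zero, zero_bstar] at h
  linear_combination (norm := abel) -h

/-- `λ_a b = ab - a`. -/
def lambdaHom : A →* AddMonoid.End A where
  toFun a := 1 + starHom a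
  map_one' := by ext b; show b + 1 ⋆ b = b; rw [one_eq_zero, zero_bstar, add_zero]
  map_mul' a b := by
    ext c
    show c + (a * b) ⋆ c = (c + b ⋆ c) + a ⋆ (c + b ⋆ c)
    rw [bstar_add, mul_bstar]; abel

variable {S T Z : Set A}

def IsSubbrace.toAddSubgroup (hS : IsSubbrace S) : AddSubgroup A where
  carrier := S
  zero_mem' := hS.zero_mem
  add_mem' := hS.add_mem
  neg_mem' := hS.neg_mem

theorem IsSubbrace.zsmul_mem (hS : IsSubbrace S) {a : A} (ha : a ∈ S) (n : ℤ) : n • a ∈ S :=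
  hS.toAddSubgroup.zsmul_mem ha n

theorem isSubbrace_univ : IsSubbrace (Set.univ : Set A) :=
  ⟨trivial, fun _ _ => trivial, fun _ => trivial, fun _ _ => trivial, fun _ => trivial⟩

theorem IsIdealIn.of_addSubgroup {S : AddSubgroup A} (hT : IsSubbrace T) (hST : (S : Set A) ⊆ T)
    (hl : ∀ a ∈ T, ∀ z ∈ S, a ⋆ z ∈ S) (hr : ∀ a ∈ T, ∀ z ∈ S, z ⋆ a ∈ S) :
    IsIdealIn (S : Set A) T where
  subset := hST
  subbrace :=
    { zero_mem := S.zero_mem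
      add_mem := S.add_mem
      neg_mem := S.neg_mem
      mul_mem := fun {z w} hz hw => by
        rw [mul_eq_add_add_bstar]
        exact S.add_mem (S.add_mem hz hw) (hr w (hST hw) z hz)
      inv_mem := fun {z} hz => by
        rw [eq_sub_of_add_eq (inv_add_bstar_inv z)]
        exact S.sub_mem (S.neg_mem hz) (hr _ (hT.inv_mem (hST hz)) z hz) }
  ambient_subbrace := hT
  star_mem_left := hl
  star_mem_right := hr

theorem IsIdeal.of_addSubgroup {S : AddSubgroup A} (hl : ∀ a, ∀ z ∈ S, a ⋆ z ∈ S)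
    (hr : ∀ a, ∀ z ∈ S, z ⋆ a ∈ S) : IsIdeal (S : Set A) :=
  IsIdealIn.of_addSubgroup isSubbrace_univ (Set.subset_univ _) (fun a _ => hl a) (fun a _ => hr a)

theorem isIdeal_zero : IsIdeal ({0} : Set A) := by
  rw [← AddSubgroup.coe_bot]
  refine IsIdeal.of_addSubgroup (fun a z hz => ?_) (fun a z hz => ?_) <;>
    rw [AddSubgroup.mem_bot] at hz ⊢ <;> simp [hz, bstar_zero, zero_bstar]

namespace IsIdeal

theorem bstar_mem_left (hZ : IsIdeal Z) (a : A) {z : A} (hz : z ∈ Z) : a ⋆ z ∈ Z :=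
  hZ.star_mem_left a trivial z hz

theorem bstar_mem_right (hZ : IsIdeal Z) (a : A) {z : A} (hz : z ∈ Z) : z ⋆ a ∈ Z :=
  hZ.star_mem_right a trivial z hz

theorem exists_add_eq_mul (hZ : IsIdeal Z) (u : A) {c : A} (hc : c ∈ Z) :
    ∃ d ∈ Z, u + c = u * d := by
  refine ⟨u⁻¹ * (u + c), ?_, (mul_inv_cancel_left u (u + c)).symm⟩
  have h : u⁻¹ * (u + c) = c + u⁻¹ ⋆ c := by
    rw [mul_add_eq, inv_mul_cancel, one_eq_zero, mul_eq_add_add_bstar]; abel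
  rw [h]
  exact hZ.subbrace.add_mem hc (hZ.bstar_mem_left _ hc)

theorem add_bstar_sub_mem (hZ : IsIdeal Z) (u b : A) {c : A} (hc : c ∈ Z) :
    (u + c) ⋆ b - u ⋆ b ∈ Z := by
  obtain ⟨d, hd, h⟩ := hZ.exists_add_eq_mul u hc
  rw [h, mul_bstar, add_sub_right_comm, add_sub_cancel_right]
  exact hZ.subbrace.add_mem (hZ.bstar_mem_left u (hZ.bstar_mem_right b hd))
    (hZ.bstar_mem_right b hd)

end IsIdeal

def leftKer (Z : Set A) : Set A := {z | ∀ b, z ⋆ b ∈ Z}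

namespace IsIdeal

variable {z w : A}

theorem subset_leftKer (hZ : IsIdeal Z) : Z ⊆ leftKer Z :=
  fun _ hz b => hZ.bstar_mem_right b hz

theorem add_mem_leftKer (hZ : IsIdeal Z) (hz : z ∈ leftKer Z) (hw : w ∈ leftKer Z) :
    z + w ∈ leftKer Z := by
  intro b
  have h : z + w = z * w + -(z ⋆ w) := by rw [mul_eq_add_add_bstar]; abel
  have hzw : (z * w) ⋆ b ∈ Z := by
    rw [mul_bstar]
    exact hZ.subbrace.add_mem (hZ.subbrace.add_mem (hz _) (hz b)) (hw b)
  have := hZ.subbrace.add_mem (hZ.add_bstar_sub_mem (z * w) b (hZ.subbrace.neg_mem (hz w))) hzw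
  rwa [sub_add_cancel, ← h] at this

theorem neg_mem_leftKer (hZ : IsIdeal Z) (hz : z ∈ leftKer Z) : -z ∈ leftKer Z := by
  intro b
  have hinv : z⁻¹ ⋆ b ∈ Z := by
    rw [inv_bstar]
    exact hZ.subbrace.neg_mem (hZ.subbrace.add_mem (hz b) (hz _))
  have := hZ.subbrace.add_mem (hZ.add_bstar_sub_mem z⁻¹ b (hz z⁻¹)) hinv
  rwa [sub_add_cancel, inv_add_bstar_inv] at this

theorem mul_mul_inv_mem_leftKer (hZ : IsIdeal Z) (a : A) (hz : z ∈ leftKer Z) :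
    a * z * a⁻¹ ∈ leftKer Z := by
  intro b
  have hy : z ⋆ (a⁻¹ ⋆ b) + z ⋆ b ∈ Z := hZ.subbrace.add_mem (hz _) (hz b)
  have h₀ := mul_bstar a a⁻¹ b
  rw [mul_inv_cancel, one_eq_zero, zero_bstar] at h₀
  have h : (a * z * a⁻¹) ⋆ b = a ⋆ (z ⋆ (a⁻¹ ⋆ b) + z ⋆ b) + (z ⋆ (a⁻¹ ⋆ b) + z ⋆ b) := by
    simp only [mul_assoc, mul_bstar, bstar_add]
    linear_combination (norm := abel) -h₀
  rw [h]
  exact hZ.subbrace.add_mem (hZ.bstar_mem_left a hy) hy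

theorem leftKer (hZ : IsIdeal Z) : IsIdeal (leftKer Z) := by
  let L : AddSubgroup A :=
    { carrier := LeftBrace.leftKer Z
      zero_mem' := fun b => by rw [zero_bstar]; exact hZ.subbrace.zero_mem
      add_mem' := hZ.add_mem_leftKer
      neg_mem' := hZ.neg_mem_leftKer }
  refine IsIdeal.of_addSubgroup (S := L) (fun a z hz => ?_) fun a z hz => hZ.subset_leftKer (hz a)
  have hw : a * z * a⁻¹ ∈ L := hZ.mul_mul_inv_mem_leftKer a hz
  -- `a ⋆ z` is read off from `(a z a⁻¹) a = a z`
  have h : a ⋆ z = a * z * a⁻¹ + (a * z * a⁻¹) ⋆ a - z := by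
    have h' := mul_eq_add_add_bstar (a * z * a⁻¹) a
    rw [inv_mul_cancel_right] at h'
    linear_combination (norm := abel) h' - mul_eq_add_add_bstar a z
  rw [h]
  exact L.sub_mem (L.add_mem hw (hZ.subset_leftKer (hw a))) hz

theorem subset_nextCenter (hZ : IsIdeal Z) : Z ⊆ nextCenter A Z :=
  fun _ hz x => ⟨hZ.bstar_mem_right x hz, hZ.bstar_mem_left x hz⟩

theorem nextCenter (hZ : IsIdeal Z) : IsIdeal (nextCenter A Z) := by
  let N : AddSubgroup A :=
    { carrier := LeftBrace.nextCenter A Z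
      zero_mem' := fun x => by
        rw [zero_bstar, bstar_zero]; exact ⟨hZ.subbrace.zero_mem, hZ.subbrace.zero_mem⟩
      add_mem' := fun hz hw x => by
        refine ⟨hZ.add_mem_leftKer (fun b => (hz b).1) (fun b => (hw b).1) x, ?_⟩
        rw [bstar_add]; exact hZ.subbrace.add_mem (hz x).2 (hw x).2
      neg_mem' := fun hz x => by
        refine ⟨hZ.neg_mem_leftKer (fun b => (hz b).1) x, ?_⟩
        rw [bstar_neg]; exact hZ.subbrace.neg_mem (hz x).2 }
  exact IsIdeal.of_addSubgroup (S := N) (fun a z hz => hZ.subset_nextCenter (hz a).2)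
    fun a z hz => hZ.subset_nextCenter (hz a).1

end IsIdeal

theorem isIdeal_starCenter : IsIdeal (starCenter A) := isIdeal_zero.nextCenter

theorem starHom_pow_apply_mem_leftStarSeries (a b : A) :
    ∀ t, (starHom a ^ t) b ∈ leftStarSeries A t
  | 0 => trivial
  | t + 1 => by
    rw [pow_succ', AddMonoid.End.coe_mul, Function.comp_apply, starHom_apply]
    exact AddSubgroup.subset_closure
      ⟨a, trivial, _, starHom_pow_apply_mem_leftStarSeries a b t, rfl⟩

theorem starHom_pow_eq_zero {K : ℕ} (hK : leftStarSeries A K = {0}) (a : A) :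
    starHom a ^ K = 0 := by
  ext b
  simpa [hK] using starHom_pow_apply_mem_leftStarSeries a b K

/-- `A / Z` is torsion-free. -/
def IsIsolated (Z : Set A) : Prop := ∀ (n : ℤ) (x : A), n ≠ 0 → n • x ∈ Z → x ∈ Z

/-- Nilpotency of `a ⋆ ·` forces `m = 0` or `z ∈ Z`. -/
theorem IsIdeal.bstar_mem_of_bstar_sub_zsmul_mem (hZ : IsIdeal Z) (hiso : IsIsolated Z) {K : ℕ}
    (hK : leftStarSeries A K = {0}) {a z : A} {m : ℤ} (h : a ⋆ z - m • z ∈ Z) : a ⋆ z ∈ Z := by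
  have hpow : ∀ t : ℕ, (starHom a ^ t) z - m ^ t • z ∈ Z := by
    intro t
    induction t with
    | zero => simpa using hZ.subbrace.zero_mem
    | succ t ih =>
      have h' : (starHom a ^ (t + 1)) z - m ^ (t + 1) • z
          = a ⋆ ((starHom a ^ t) z - m ^ t • z) + m ^ t • (a ⋆ z - m • z) := by
        rw [pow_succ', AddMonoid.End.coe_mul, Function.comp_apply, starHom_apply, bstar_sub,
          bstar_zsmul, smul_sub, pow_succ, mul_smul]
        abel
      rw [h']
      exact hZ.subbrace.add_mem (hZ.bstar_mem_left a ih) (hZ.subbrace.zsmul_mem h _)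
  have hK' := hZ.subbrace.neg_mem (hpow K)
  rw [starHom_pow_eq_zero hK, AddMonoid.End.zero_apply, zero_sub, neg_neg] at hK'
  by_cases hm : m = 0
  · simpa [hm] using h
  · exact hZ.bstar_mem_left a (hiso _ z (pow_ne_zero K hm) hK')

theorem leftKer_subset_nextCenter (hT : IsTBrace A) {K : ℕ} (hK : leftStarSeries A K = {0})
    (hZ : IsIdeal Z) (hiso : IsIsolated Z) : leftKer Z ⊆ nextCenter A Z := by
  intro z hz
  let I : AddSubgroup A := AddSubgroup.zmultiples z ⊔ hZ.subbrace.toAddSubgroup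
  have hZI : Z ⊆ I := fun x hx => AddSubgroup.mem_sup_right hx
  have hIK : I ≤ hZ.leftKer.subbrace.toAddSubgroup :=
    sup_le (AddSubgroup.zmultiples_le.2 hz) hZ.subset_leftKer
  have hI : IsIdeal (I : Set A) :=
    hT _ _ (IsIdealIn.of_addSubgroup hZ.leftKer.subbrace hIK (fun a ha x _ => hZI (ha x))
      fun a _ x hx => hZI (hIK hx a)) hZ.leftKer
  refine fun a => ⟨hz a, ?_⟩
  obtain ⟨y, hy, c, hc, hyc⟩ :=
    AddSubgroup.mem_sup.1 (hI.bstar_mem_left a (AddSubgroup.mem_sup_left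
      (AddSubgroup.mem_zmultiples z)))
  obtain ⟨m, rfl⟩ := AddSubgroup.mem_zmultiples_iff.1 hy
  exact hZ.bstar_mem_of_bstar_sub_zsmul_mem hiso hK (m := m)
    (by rw [← hyc, add_sub_cancel_left]; exact hc)

theorem pow_eq_nsmul_of_bstar_eq_zero {z : A} (h : ∀ b, b ⋆ z = 0) : ∀ n : ℕ, z ^ n = n • z
  | 0 => by rw [pow_zero, zero_smul, one_eq_zero]
  | n + 1 => by
    rw [pow_succ, mul_eq_add_add_bstar, h, add_zero, pow_eq_nsmul_of_bstar_eq_zero h n,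
      succ_nsmul]

theorem isIsolated_starCenter [IsAddTorsionFree A] {K : ℕ} (hK : leftStarSeries A K = {0}) :
    IsIsolated (starCenter A) := by
  intro n z hn hnz
  have hright : ∀ b, b ⋆ z = 0 := fun b =>
    (IsAddTorsionFree.zsmul_eq_zero_iff_right hn).1 (bstar_zsmul b n z ▸ (hnz b).2)
  have hN : n.natAbs • z ∈ starCenter A := by
    rcases Int.natAbs_eq n with h | h
    · rwa [← natCast_zsmul, ← h]
    · rw [← natCast_zsmul, ← neg_neg (n.natAbs : ℤ), ← h, neg_zsmul]
      exact isIdeal_starCenter.subbrace.neg_mem hnz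
  -- `λ_z ^ |n| = λ_{z ^ |n|} = λ_{|n| • z} = 1`
  have hlam : (1 + starHom z) ^ n.natAbs = 1 := by
    change lambdaHom z ^ n.natAbs = 1
    rw [← map_pow, pow_eq_nsmul_of_bstar_eq_zero hright]
    ext b
    change b + _ ⋆ b = b
    rw [(hN b).1, add_zero]
  have hzero : starHom z = 0 := eq_zero_of_isNilpotent_of_one_add_pow_eq_one
    ⟨K, starHom_pow_eq_zero hK z⟩ (Int.natAbs_ne_zero.2 hn) hlam
  exact fun b => ⟨DFunLike.congr_fun hzero b, hright b⟩

theorem add_bstar_of_mem_starCenter {c : A} (hc : c ∈ starCenter A) (u b : A) :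
    (u + c) ⋆ b = u ⋆ b := by
  obtain ⟨d, hd, h⟩ := isIdeal_starCenter.exists_add_eq_mul u hc
  rw [h, mul_bstar, (hd b).1, bstar_zero, zero_add, add_zero]

variable {u v w : A}

theorem add_bstar_of_mem_nextCenter (hu : u ∈ nextCenter A (starCenter A))
    (hv : v ∈ nextCenter A (starCenter A)) (x : A) : (u + v) ⋆ x = u ⋆ x + v ⋆ x := by
  have h : u + v = u * v + -(u ⋆ v) := by rw [mul_eq_add_add_bstar]; abel
  rw [h, add_bstar_of_mem_starCenter (isIdeal_starCenter.subbrace.neg_mem (hu v).1), mul_bstar,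
    ((hv x).1 u).2, zero_add]

theorem zsmul_bstar_of_mem_nextCenter (hu : u ∈ nextCenter A (starCenter A)) (m : ℤ) (x : A) :
    (m • u) ⋆ x = m • (u ⋆ x) :=
  let f : isIdeal_starCenter.nextCenter.subbrace.toAddSubgroup →+ A :=
    AddMonoidHom.mk' (fun v => (v : A) ⋆ x) fun v w => add_bstar_of_mem_nextCenter v.2 w.2 x
  map_zsmul f m ⟨u, hu⟩

theorem zsmul_add_bstar (hw : w ∈ nextCenter A (starCenter A)) {c : A} (hc : c ∈ starCenter A)
    (m : ℤ) (b : A) : (m • w + c) ⋆ b = m • (w ⋆ b) := by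
  rw [add_bstar_of_mem_starCenter hc, zsmul_bstar_of_mem_nextCenter hw]

theorem bstar_zsmul_add {c : A} (hc : c ∈ starCenter A) (m : ℤ) (b : A) :
    b ⋆ (m • w + c) = m • (b ⋆ w) := by
  rw [bstar_add, bstar_zsmul, (hc b).2, add_zero]

open AddSubgroup in
/-- `ℤ w + ℤ (w ⋆ w)` is an ideal of the ideal `ℤ w + ζ(⋆, A)`, hence of `A`. -/
theorem bstar_mem_zmultiples_of_mem_nextCenter (hT : IsTBrace A)
    (hiso : IsIsolated (starCenter A)) (hw : w ∈ nextCenter A (starCenter A))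
    (hw₁ : w ∉ starCenter A) (a : A) :
    a ⋆ w ∈ zmultiples (w ⋆ w) ∧ w ⋆ a ∈ zmultiples (w ⋆ w) := by
  let C : AddSubgroup A := isIdeal_starCenter.subbrace.toAddSubgroup
  have he : w ⋆ w ∈ C := (hw w).1
  let J := zmultiples w ⊔ C
  let I := zmultiples w ⊔ zmultiples (w ⋆ w)
  have hJ : IsIdeal (J : Set A) := by
    refine IsIdeal.of_addSubgroup (fun a x hx => ?_) fun a x hx => ?_ <;>
      obtain ⟨_, ⟨m, rfl⟩, c, hc, rfl⟩ := mem_sup.1 hx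
    · rw [bstar_zsmul_add hc]
      exact mem_sup_right (C.zsmul_mem (hw a).2 m)
    · rw [zsmul_add_bstar hw hc]
      exact mem_sup_right (C.zsmul_mem (hw a).1 m)
  have hIJ : I ≤ J := sup_le_sup_left (zmultiples_le.2 he) _
  have hIJ' : IsIdealIn (I : Set A) J := by
    refine IsIdealIn.of_addSubgroup hJ.subbrace hIJ (fun a ha x hx => ?_) fun a ha x hx => ?_ <;>
      obtain ⟨_, ⟨m, rfl⟩, c, hc, rfl⟩ := mem_sup.1 ha <;>
      obtain ⟨_, ⟨k, rfl⟩, _, ⟨l, rfl⟩, rfl⟩ := mem_sup.1 hx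
    · rw [zsmul_add_bstar hw hc, bstar_add, bstar_zsmul, bstar_zsmul, (he w).2, smul_zero, add_zero]
      exact mem_sup_right (zsmul_mem (zsmul_mem (mem_zmultiples _) k) m)
    · rw [zsmul_add_bstar hw (C.zsmul_mem he l), bstar_zsmul_add hc]
      exact mem_sup_right (zsmul_mem (zsmul_mem (mem_zmultiples _) m) k)
  have hI : IsIdeal (I : Set A) := hT _ _ hIJ' hJ
  have hIC : ∀ y ∈ I, y ∈ C → y ∈ zmultiples (w ⋆ w) := by
    intro y hy hyC
    obtain ⟨_, ⟨m, rfl⟩, _, ⟨k, rfl⟩, rfl⟩ := mem_sup.1 hy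
    have hm : m = 0 := by
      by_contra hm
      have hmw : m • w ∈ C := by simpa using C.sub_mem hyC (C.zsmul_mem he k)
      exact hw₁ (hiso m w hm hmw)
    simp only [hm, zero_smul, zero_add]
    exact zsmul_mem (mem_zmultiples _) k
  have hwI : w ∈ I := mem_sup_left (mem_zmultiples w)
  exact ⟨hIC _ (hI.bstar_mem_left a hwI) (hw a).2, hIC _ (hI.bstar_mem_right a hwI) (hw a).1⟩

theorem nextCenter_starCenter_subset (hT : IsTBrace A) [IsAddTorsionFree A]
    (hiso : IsIsolated (starCenter A)) : nextCenter A (starCenter A) ⊆ starCenter A := by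
  intro z hz
  by_contra hz₁
  have h2z : (2 : ℤ) • z ∈ nextCenter A (starCenter A) :=
    isIdeal_starCenter.nextCenter.subbrace.zsmul_mem hz 2
  have h2z₁ : (2 : ℤ) • z ∉ starCenter A := fun h => hz₁ (hiso 2 z two_ne_zero h)
  -- `z ⋆ 2z = 2 (z ⋆ z)` is a multiple of `2z ⋆ 2z = 4 (z ⋆ z)`, which forces `z ⋆ z = 0`
  obtain ⟨k, hk⟩ := AddSubgroup.mem_zmultiples_iff.1
    (bstar_mem_zmultiples_of_mem_nextCenter hT hiso h2z h2z₁ z).1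
  rw [zsmul_bstar_of_mem_nextCenter hz, bstar_zsmul, smul_smul, smul_smul] at hk
  have he : z ⋆ z = 0 := by
    refine (IsAddTorsionFree.zsmul_eq_zero_iff_right (n := k * 2 * 2 - 2) (by omega)).1 ?_
    rw [sub_smul, hk, sub_self]
  have hall := bstar_mem_zmultiples_of_mem_nextCenter hT hiso hz hz₁
  simp only [he, AddSubgroup.zmultiples_zero_eq_bot, AddSubgroup.mem_bot] at hall
  exact hz₁ fun a => ⟨(hall a).2, (hall a).1⟩

theorem leftKer_starCenter_subset (hT : IsTBrace A) [IsAddTorsionFree A] {K : ℕ}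
    (hK : leftStarSeries A K = {0}) : leftKer (starCenter A) ⊆ starCenter A :=
  (leftKer_subset_nextCenter hT hK isIdeal_starCenter (isIsolated_starCenter hK)).trans
    (nextCenter_starCenter_subset hT (isIsolated_starCenter hK))

end LeftBrace

open LeftBrace in
/-- **Corollary 2.** A Smoktunowicz-nilpotent T-brace with torsion-free additive group
is abelian. -/
theorem abelian_of_isSmoktunowiczNilpotent_of_torsionFree
    {A : Type u} [LeftBrace A] (hT : IsTBrace A)
    (hfree : ∀ a : A, a ≠ 0 → ¬ IsOfFinAddOrder a)
    (hSN : IsSmoktunowiczNilpotent A) :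
    ∀ a b : A, bstar a b = 0 := by
  obtain ⟨n, K, hn, hK⟩ := hSN
  have : IsAddTorsionFree A := IsAddTorsionFree.of_not_isOfFinAddOrder fun a => hfree a
  have hstep (m : ℕ) (h : rightStarSeries A (m + 1) ⊆ starCenter A) :
      rightStarSeries A m ⊆ starCenter A := fun x hx =>
    leftKer_starCenter_subset hT hK fun b => h (AddSubgroup.subset_closure ⟨x, hx, b, trivial, rfl⟩)
  have hbot : rightStarSeries A n ⊆ starCenter A := by
    rw [hn, Set.singleton_subset_iff]
    exact isIdeal_starCenter.subbrace.zero_mem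
  have huniv : rightStarSeries A 0 ⊆ starCenter A :=
    Nat.decreasingInduction (fun m _ => hstep m) hbot (Nat.zero_le n)
  exact fun a b => (huniv trivial b).1
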